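/- arXiv:math/0406397 — 2 statements merged into one kernel-verified Lean document; each statement's English description precedes it below -/
import Mathlib

section
/- The curvature components of the metric G satisfy: R^{n+3}_{a, b, c} = 0 and R^{n+4}_{a, b, c} = 0 identically for all a, b, c ∈ {1, …, n+4}; and R^a_{b, c, d} = 0 identically whenever at least one of b, c, d equals 1 or 2. -/
namespace HolPaper

open Matrix

/-- Points of `ℝ^{n+4}`, with coordinates indexed by `Fin (n+4)`.
The paper's index `1` is `p1`, `2` is `p2`, `î ∈ {3,…,n+2}` is `ehat i` for `i : Fin n`,
`n+3` is `q1` and `n+4` is `q2`. -/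
abbrev Pt (n : ℕ) := Fin (n + 4) → ℝ

def p1 (n : ℕ) : Fin (n + 4) := ⟨0, by omega⟩
def p2 (n : ℕ) : Fin (n + 4) := ⟨1, by omega⟩
def ehat {n : ℕ} (i : Fin n) : Fin (n + 4) := ⟨i.1 + 2, by have := i.isLt; omega⟩
def q1 (n : ℕ) : Fin (n + 4) := ⟨n + 2, by omega⟩
def q2 (n : ℕ) : Fin (n + 4) := ⟨n + 3, by omega⟩

noncomputable section

variable {n N : ℕ}

/-- `u^î(x) = Σ_ĵ Σ_α (A_α)_{î-2,ĵ-2} x^ĵ (x^{n+3})^α`. -/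
def u (A : Fin N → Matrix (Fin n) (Fin n) ℝ) (i : Fin n) (x : Pt n) : ℝ :=
  ∑ j : Fin n, ∑ α : Fin N, A α i j * x (ehat j) * x (q1 n) ^ (α.1 + 1)

/-- `F(x) = Σ_î (x^î)²`. -/
def Fq (n : ℕ) (x : Pt n) : ℝ := ∑ i : Fin n, x (ehat i) ^ 2

/-- The Gram matrix `G(x)` of the metric. -/
def Gmet (A : Fin N → Matrix (Fin n) (Fin n) ℝ) (x : Pt n) :
    Matrix (Fin (n + 4)) (Fin (n + 4)) ℝ := fun a b =>
  (if (a = p1 n ∧ b = q1 n) ∨ (a = q1 n ∧ b = p1 n) then (1 : ℝ) else 0)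
  + (if (a = p2 n ∧ b = q2 n) ∨ (a = q2 n ∧ b = p2 n) then (1 : ℝ) else 0)
  + (∑ i : Fin n, if a = ehat i ∧ b = ehat i then (1 : ℝ) else 0)
  + (∑ i : Fin n, if (a = ehat i ∧ b = q2 n) ∨ (a = q2 n ∧ b = ehat i) then u A i x else 0)
  + (if (a = q1 n ∧ b = q1 n) ∨ (a = q2 n ∧ b = q2 n) then Fq n x else 0)

/-- Partial derivative `∂_b f` of a function on `ℝ^{n+4}`. -/
def pd (b : Fin (n + 4)) (f : Pt n → ℝ) (x : Pt n) : ℝ :=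
  fderiv ℝ f x (Pi.single b 1)

/-- Christoffel symbols
`Γ^a_{bc} = ½ Σ_d G^{ad} (∂_b G_{dc} + ∂_c G_{bd} − ∂_d G_{bc})`. -/
def Γchr (A : Fin N → Matrix (Fin n) (Fin n) ℝ) (a b c : Fin (n + 4)) (x : Pt n) : ℝ :=
  (1 / 2) * ∑ d : Fin (n + 4), (Gmet A x)⁻¹ a d *
    (pd b (fun y => Gmet A y d c) x + pd c (fun y => Gmet A y b d) x
      - pd d (fun y => Gmet A y b c) x)

/-- Curvature components
`R^a_{b,c,d} = ∂_c Γ^a_{db} − ∂_d Γ^a_{cb} + Σ_e (Γ^a_{ce} Γ^e_{db} − Γ^a_{de} Γ^e_{cb})`. -/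
def Rcurv (A : Fin N → Matrix (Fin n) (Fin n) ℝ) (a b c d : Fin (n + 4)) (x : Pt n) : ℝ :=
  pd c (Γchr A a d b) x - pd d (Γchr A a c b) x
  + ∑ e : Fin (n + 4), (Γchr A a c e x * Γchr A e d b x - Γchr A a d e x * Γchr A e c b x)

/-- Auxiliary recursion for iterated covariant derivatives of the curvature; the list of
differentiation indices is stored in *reverse* order (most recent derivative first). -/
def covRAux (A : Fin N → Matrix (Fin n) (Fin n) ℝ) :
    Fin (n + 4) → Fin (n + 4) → Fin (n + 4) → Fin (n + 4) → List (Fin (n + 4)) → Pt n → ℝ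
  | a, b, c, d, [], x => Rcurv A a b c d x
  | a, b, c, d, f :: fs, x =>
      pd f (covRAux A a b c d fs) x
      + ∑ l : Fin (n + 4), Γchr A a f l x * covRAux A l b c d fs x
      - ∑ l : Fin (n + 4), Γchr A l f b x * covRAux A a l c d fs x
      - ∑ l : Fin (n + 4), Γchr A l f c x * covRAux A a b l d fs x
      - ∑ l : Fin (n + 4), Γchr A l f d x * covRAux A a b c l fs x
      - ∑ s : Fin fs.length, ∑ l : Fin (n + 4),
          Γchr A l f (fs.get s) x * covRAux A a b c d (fs.set s l) x
  termination_by a b c d fs => fs.length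
  decreasing_by all_goals simp [List.length_set]

/-- `covR A a b c d [f_1, …, f_r] x` is the component `R^a_{b,c,d;f_1;…;f_r}(x)` of the
`r`-th covariant derivative of the curvature tensor (indices in natural order). -/
def covR (A : Fin N → Matrix (Fin n) (Fin n) ℝ) (a b c d : Fin (n + 4))
    (fs : List (Fin (n + 4))) (x : Pt n) : ℝ :=
  covRAux A a b c d fs.reverse x

/-!
The metric does not depend on `x¹, x²`, and the rows `1, 2` of `G` are the constant unit
vectors `e_{n+3}, e_{n+4}`. Hence `∂₁, ∂₂` kill `G` and everything built from it, and the
symbols of the first kind `Γ_{dbc}` vanish as soon as one index is `1` or `2`. This gives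
`Γ^a_{bc} = 0` for `b` or `c` in `{1, 2}`; and since the rows `n+3, n+4` of `G⁻¹` are `e₁, e₂`,
`Γ^{n+3}_{bc} = Γ_{1bc}/2 = 0` and likewise `Γ^{n+4}_{bc} = 0`. Every term of the
curvature components in question then vanishes.
-/

section TranslationInvariance

variable {E F : Type*} [NormedAddCommGroup E] [NormedSpace ℝ E]
  [NormedAddCommGroup F] [NormedSpace ℝ F] {f : E → F} {v : E}

theorem fderiv_add_smul_of_forall_add_smul_eq (hf : ∀ x (s : ℝ), f (x + s • v) = f x)
    (x : E) (s : ℝ) : fderiv ℝ f (x + s • v) = fderiv ℝ f x := by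
  rw [← fderiv_comp_add_right, funext fun y => hf y s]

theorem fderiv_apply_eq_zero_of_forall_add_smul_eq (hf : ∀ x (s : ℝ), f (x + s • v) = f x)
    (x : E) : fderiv ℝ f x v = 0 := by
  by_cases hd : DifferentiableAt ℝ f x
  · rw [← hd.lineDeriv_eq_fderiv, lineDeriv, funext fun t => hf x t, deriv_const]
  · rw [fderiv_zero_of_not_differentiableAt hd, _root_.zero_apply]

end TranslationInvariance

theorem Matrix.nonsing_inv_row_eq_single_of_row_eq_single {m R : Type*} [Fintype m]
    [DecidableEq m] [CommRing R] {M : Matrix m m R} {i j : m} (h : M i = Pi.single j 1)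
    (hM : IsUnit M.det) : M⁻¹ j = Pi.single i 1 := by
  ext k
  have := congrFun (congrFun (M.mul_nonsing_inv hM) i) k
  rw [Matrix.mul_apply, h] at this
  simpa [Pi.single_apply, Matrix.one_apply, eq_comm] using this

@[simp] lemma p1_ne_p2 : p1 n ≠ p2 n := by simp [p1, p2]
@[simp] lemma p2_ne_p1 : p2 n ≠ p1 n := p1_ne_p2.symm
@[simp] lemma p1_ne_q1 : p1 n ≠ q1 n := by simp [p1, q1]
@[simp] lemma p1_ne_q2 : p1 n ≠ q2 n := by simp [p1, q2]
@[simp] lemma p2_ne_q1 : p2 n ≠ q1 n := by simp [p2, q1]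
@[simp] lemma p2_ne_q2 : p2 n ≠ q2 n := by simp [p2, q2]
@[simp] lemma p1_ne_ehat (i : Fin n) : p1 n ≠ ehat i := by simp [ehat, p1, Fin.ext_iff]
@[simp] lemma p2_ne_ehat (i : Fin n) : p2 n ≠ ehat i := by simp [ehat, p2, Fin.ext_iff]

variable {A : Fin N → Matrix (Fin n) (Fin n) ℝ}

lemma Gmet_p1 (x : Pt n) : Gmet A x (p1 n) = Pi.single (q1 n) 1 := by
  ext b; simp [Gmet, Pi.single_apply]

lemma Gmet_p2 (x : Pt n) : Gmet A x (p2 n) = Pi.single (q2 n) 1 := by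
  ext b; simp [Gmet, Pi.single_apply]

lemma Gmet_comm (x : Pt n) (b c : Fin (n + 4)) : Gmet A x b c = Gmet A x c b := by
  simp only [Gmet, or_comm, and_comm]

lemma Gmet_add_smul_p {e : Fin (n + 4)} (he : e = p1 n ∨ e = p2 n) (x : Pt n) (s : ℝ) :
    Gmet A (x + s • Pi.single e 1) = Gmet A x := by
  ext a b
  rcases he with rfl | rfl <;> simp [Gmet, u, Fq]

lemma pd_p_Gmet_eq_zero {e : Fin (n + 4)} (he : e = p1 n ∨ e = p2 n) (b c : Fin (n + 4))
    (x : Pt n) : pd e (fun y => Gmet A y b c) x = 0 :=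
  fderiv_apply_eq_zero_of_forall_add_smul_eq
    (fun y s => by rw [Gmet_add_smul_p he]) x

lemma pd_Gmet_p_left_eq_zero {e : Fin (n + 4)} (he : e = p1 n ∨ e = p2 n) (b c : Fin (n + 4))
    (x : Pt n) : pd b (fun y => Gmet A y e c) x = 0 := by
  rcases he with rfl | rfl <;> simp [pd, Gmet_p1, Gmet_p2]

lemma pd_Gmet_p_right_eq_zero {e : Fin (n + 4)} (he : e = p1 n ∨ e = p2 n) (b c : Fin (n + 4))
    (x : Pt n) : pd b (fun y => Gmet A y c e) x = 0 := by
  simp only [Gmet_comm _ c e, pd_Gmet_p_left_eq_zero he]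

lemma pd_Gmet_add_smul_p {e : Fin (n + 4)} (he : e = p1 n ∨ e = p2 n)
    (b c d : Fin (n + 4)) (x : Pt n) (s : ℝ) :
    pd b (fun y => Gmet A y c d) (x + s • Pi.single e 1) = pd b (fun y => Gmet A y c d) x := by
  rw [pd, pd, fderiv_add_smul_of_forall_add_smul_eq
    (fun y s => by rw [Gmet_add_smul_p he])]

/-- Christoffel symbols of the first kind, `2 Γ_{dbc}`. -/
def christoffelFirst (A : Fin N → Matrix (Fin n) (Fin n) ℝ) (d b c : Fin (n + 4))
    (x : Pt n) : ℝ :=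
  pd b (fun y => Gmet A y d c) x + pd c (fun y => Gmet A y b d) x
    - pd d (fun y => Gmet A y b c) x

lemma Γchr_eq_sum (a b c : Fin (n + 4)) (x : Pt n) :
    Γchr A a b c x = 1 / 2 * ∑ d, (Gmet A x)⁻¹ a d * christoffelFirst A d b c x :=
  rfl

lemma christoffelFirst_eq_zero_of_p {d b c : Fin (n + 4)}
    (h : (d = p1 n ∨ d = p2 n) ∨ (b = p1 n ∨ b = p2 n) ∨ (c = p1 n ∨ c = p2 n)) (x : Pt n) :
    christoffelFirst A d b c x = 0 := by
  rcases h with he | he | he <;>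
    simp [christoffelFirst, pd_p_Gmet_eq_zero he, pd_Gmet_p_left_eq_zero he,
      pd_Gmet_p_right_eq_zero he]

lemma christoffelFirst_add_smul_p {e : Fin (n + 4)} (he : e = p1 n ∨ e = p2 n)
    (d b c : Fin (n + 4)) (x : Pt n) (s : ℝ) :
    christoffelFirst A d b c (x + s • Pi.single e 1) = christoffelFirst A d b c x := by
  simp only [christoffelFirst, pd_Gmet_add_smul_p he]

lemma Γchr_eq_zero_of_p {a b c : Fin (n + 4)}
    (h : (b = p1 n ∨ b = p2 n) ∨ (c = p1 n ∨ c = p2 n)) (x : Pt n) : Γchr A a b c x = 0 := by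
  simp [Γchr_eq_sum, christoffelFirst_eq_zero_of_p (Or.inr h)]

lemma Γchr_q_eq_zero {a : Fin (n + 4)} (ha : a = q1 n ∨ a = q2 n) (b c : Fin (n + 4))
    (x : Pt n) : Γchr A a b c x = 0 := by
  -- `G x` is in fact invertible, but the singular case is free: there `⁻¹` is `0`.
  by_cases hG : IsUnit (Gmet A x).det
  · rcases ha with rfl | rfl
    · simp [Γchr_eq_sum, Matrix.nonsing_inv_row_eq_single_of_row_eq_single (Gmet_p1 x) hG,
        Pi.single_apply, christoffelFirst_eq_zero_of_p (Or.inl (Or.inl rfl))]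
    · simp [Γchr_eq_sum, Matrix.nonsing_inv_row_eq_single_of_row_eq_single (Gmet_p2 x) hG,
        Pi.single_apply, christoffelFirst_eq_zero_of_p (Or.inl (Or.inr rfl))]
  · simp [Γchr_eq_sum, Matrix.nonsing_inv_apply_not_isUnit _ hG]

lemma pd_p_Γchr_eq_zero {e : Fin (n + 4)} (he : e = p1 n ∨ e = p2 n) (a b c : Fin (n + 4))
    (x : Pt n) : pd e (Γchr A a b c) x = 0 :=
  fderiv_apply_eq_zero_of_forall_add_smul_eq (fun y s => by
    simp only [Γchr_eq_sum, Gmet_add_smul_p he, christoffelFirst_add_smul_p he]) x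

lemma Rcurv_swap (a b c d : Fin (n + 4)) (x : Pt n) :
    Rcurv A a b d c x = -Rcurv A a b c d x := by
  rw [Rcurv, Rcurv, neg_add, ← Finset.sum_neg_distrib]
  simp only [neg_sub]

lemma Rcurv_q_eq_zero {a : Fin (n + 4)} (ha : a = q1 n ∨ a = q2 n) (b c d : Fin (n + 4))
    (x : Pt n) : Rcurv A a b c d x = 0 := by
  have hΓ : ∀ b c, Γchr A a b c = 0 := fun b c => funext (Γchr_q_eq_zero ha b c)
  simp [Rcurv, hΓ, pd]

lemma Rcurv_eq_zero_of_p_second {b : Fin (n + 4)} (hb : b = p1 n ∨ b = p2 n)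
    (a c d : Fin (n + 4)) (x : Pt n) : Rcurv A a b c d x = 0 := by
  have hΓ : ∀ a c, Γchr A a c b = 0 := fun a c => funext (Γchr_eq_zero_of_p (Or.inr hb))
  simp [Rcurv, hΓ, pd]

lemma Rcurv_eq_zero_of_p_fourth {d : Fin (n + 4)} (hd : d = p1 n ∨ d = p2 n)
    (a b c : Fin (n + 4)) (x : Pt n) : Rcurv A a b c d x = 0 := by
  have hΓ : ∀ a b, Γchr A a d b = 0 := fun a b => funext (Γchr_eq_zero_of_p (Or.inl hd))
  rw [Rcurv, pd_p_Γchr_eq_zero hd]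
  simp [hΓ, pd]

theorem statement7_general (n N : ℕ)
    (A : Fin N → Matrix (Fin n) (Fin n) ℝ) :
    (∀ (a b c : Fin (n + 4)) (x : Pt n),
      Rcurv A (q1 n) a b c x = 0 ∧ Rcurv A (q2 n) a b c x = 0) ∧
    (∀ (a b c d : Fin (n + 4)),
      (b = p1 n ∨ b = p2 n ∨ c = p1 n ∨ c = p2 n ∨ d = p1 n ∨ d = p2 n) →
      ∀ x : Pt n, Rcurv A a b c d x = 0) := by
  refine ⟨fun a b c x => ⟨Rcurv_q_eq_zero (Or.inl rfl) a b c x,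
    Rcurv_q_eq_zero (Or.inr rfl) a b c x⟩, fun a b c d h x => ?_⟩
  obtain hb | hc | hd :
      (b = p1 n ∨ b = p2 n) ∨ (c = p1 n ∨ c = p2 n) ∨ (d = p1 n ∨ d = p2 n) := by tauto
  · exact Rcurv_eq_zero_of_p_second hb a c d x
  · rw [← neg_eq_zero, ← Rcurv_swap]
    exact Rcurv_eq_zero_of_p_fourth hc a b d x
  · exact Rcurv_eq_zero_of_p_fourth hd a b c x

/-- `R^{n+3}_{a,b,c} = R^{n+4}_{a,b,c} = 0`, and `R^a_{b,c,d} = 0` whenever one of the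
lower indices `b, c, d` equals `1` or `2`. -/
theorem statement7 (n N : ℕ) (hn : 1 ≤ n) (hN : 1 ≤ N)
    (A : Fin N → Matrix (Fin n) (Fin n) ℝ) (hA : ∀ α, (A α)ᵀ = -A α) :
    (∀ (a b c : Fin (n + 4)) (x : Pt n),
      Rcurv A (q1 n) a b c x = 0 ∧ Rcurv A (q2 n) a b c x = 0) ∧
    (∀ (a b c d : Fin (n + 4)),
      (b = p1 n ∨ b = p2 n ∨ c = p1 n ∨ c = p2 n ∨ d = p1 n ∨ d = p2 n) →
      ∀ x : Pt n, Rcurv A a b c d x = 0) :=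
  statement7_general n N A

end
end HolPaper
end

section
/- For every r ≥ 0, all î, ĵ ∈ {3, …, n+2} and all b, c, f_1, …, f_r ∈ {1, …, n+4}, the function R^î_{ĵ, b, c; f_1; …; f_r} does not depend on the coordinate x^{n+4}: ∂_{n+4} R^î_{ĵ, b, c; f_1; …; f_r} = 0 identically on ℝ^{n+4}. -/
namespace HolPaper

open Matrix

noncomputable section

variable {n N : ℕ}

/-! The metric `G` does not involve `x^{n+4}`, so it is invariant under translation along that
coordinate axis. Everything the curvature and its covariant derivatives are built from —
`G⁻¹`, partial derivatives, sums and products — preserves this invariance, and a function that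
is constant along a line has zero derivative in the direction of that line. -/

open Function

section Translation

variable {E F : Type*} [NormedAddCommGroup E] [NormedSpace ℝ E]
  [NormedAddCommGroup F] [NormedSpace ℝ F] {f : E → F}

theorem _root_.Function.Periodic.fderiv {p : E} (hf : Periodic f p) : Periodic (fderiv ℝ f) p :=
  fun x => by rw [← fderiv_comp_add_right, hf.funext]

theorem fderiv_apply_eq_zero_of_periodic_smul {v : E} (hf : ∀ s : ℝ, Periodic f (s • v))
    (x : E) : fderiv ℝ f x v = 0 := by
  by_cases hd : DifferentiableAt ℝ f x
  · have hline : (fun t : ℝ => f (x + t • v)) = fun _ => f x := funext fun t => hf t x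
    rw [← hd.lineDeriv_eq_fderiv, lineDeriv, hline, deriv_const]
  · rw [fderiv_zero_of_not_differentiableAt hd, _root_.zero_apply]

end Translation

variable {n N : ℕ} {A : Fin N → Matrix (Fin n) (Fin n) ℝ} {p : Pt n}

theorem _root_.Function.Periodic.pd {f : Pt n → ℝ} (hf : Periodic f p) (b : Fin (n + 4)) :
    Periodic (pd b f) p :=
  fun x => congrArg (· (Pi.single b 1)) (hf.fderiv x)

theorem ehat_ne_q2 (i : Fin n) : ehat i ≠ q2 n := by
  simp only [ehat, q2, Ne, Fin.ext_iff]
  omega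

theorem q1_ne_q2 : q1 n ≠ q2 n := by
  simp only [q1, q2, Ne, Fin.ext_iff]
  omega

theorem add_smul_single_q2_apply (x : Pt n) (s : ℝ) {c : Fin (n + 4)} (hc : c ≠ q2 n) :
    (x + s • (Pi.single (q2 n) 1 : Pt n)) c = x c := by
  simp [hc]

theorem u_periodic (A : Fin N → Matrix (Fin n) (Fin n) ℝ) (i : Fin n) (s : ℝ) :
    Periodic (u A i) (s • Pi.single (q2 n) 1) := fun x => by
  simp only [u, add_smul_single_q2_apply x s (ehat_ne_q2 _),
    add_smul_single_q2_apply x s q1_ne_q2]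

theorem Fq_periodic (s : ℝ) : Periodic (Fq n) (s • Pi.single (q2 n) 1) := fun x => by
  simp only [Fq, add_smul_single_q2_apply x s (ehat_ne_q2 _)]

theorem Gmet_periodic (A : Fin N → Matrix (Fin n) (Fin n) ℝ) (s : ℝ) :
    Periodic (Gmet A) (s • Pi.single (q2 n) 1) := fun x => by
  ext a b
  simp only [Gmet, u_periodic A _ s x, Fq_periodic s x]

section PeriodicMetric

variable (hG : Periodic (Gmet A) p)
include hG

theorem Γchr_periodic (a b c : Fin (n + 4)) : Periodic (Γchr A a b c) p := by
  have hGij (i j : Fin (n + 4)) : Periodic (fun y => Gmet A y i j) p :=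
    fun x => by simp only [hG x]
  intro x
  simp only [Γchr, hG x, (hGij _ _).pd _ x]

theorem Rcurv_periodic (a b c d : Fin (n + 4)) : Periodic (Rcurv A a b c d) p := fun x => by
  simp only [Rcurv, (Γchr_periodic hG _ _ _).pd _ x, Γchr_periodic hG _ _ _ x]

theorem covRAux_periodic (fs : List (Fin (n + 4))) (a b c d : Fin (n + 4)) :
    Periodic (covRAux A a b c d fs) p := by
  induction hlen : fs.length generalizing fs a b c d with
  | zero =>
    obtain rfl := List.length_eq_zero_iff.mp hlen
    intro x
    simpa only [covRAux] using Rcurv_periodic hG a b c d x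
  | succ m ih =>
    obtain ⟨f, fs, rfl⟩ := List.exists_cons_of_length_eq_add_one hlen
    have hfs : fs.length = m := Nat.succ.inj hlen
    have hprev (a b c d) : Periodic (covRAux A a b c d fs) p := ih fs a b c d hfs
    have hset (t : Fin fs.length) (l a b c d) : Periodic (covRAux A a b c d (fs.set t l)) p :=
      ih _ a b c d (by rw [List.length_set, hfs])
    intro x
    simp only [covRAux, (hprev _ _ _ _).pd _ x, hprev _ _ _ _ x, hset _ _ _ _ _ _ x,
      Γchr_periodic hG _ _ _ x]

end PeriodicMetric

theorem statement11 (n N : ℕ)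
    (A : Fin N → Matrix (Fin n) (Fin n) ℝ) :
    ∀ (fs : List (Fin (n + 4))) (b c : Fin (n + 4)) (i j : Fin n) (x : Pt n),
      pd (q2 n) (covR A (ehat i) (ehat j) b c fs) x = 0 := fun fs _ _ _ _ =>
  fderiv_apply_eq_zero_of_periodic_smul fun s =>
    covRAux_periodic (Gmet_periodic A s) fs.reverse _ _ _ _

end
end HolPaper
end
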